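/- arXiv:1008.2907 — 4 statements merged into one kernel-verified Lean document; each statement's English description precedes it below -/
import Mathlib

section
/- Let H = ℓ²(ℤ) with standard orthonormal basis {e_b}_{b∈ℤ}. Then there exist a unitary operator U on H which is weakly stable (i.e. Uⁿ → 0 in the weak operator topology as n → ∞) and a bounded linear operator A on H such that the Cesàro means (1/N) ∑_{n=1}^N Uⁿ A Uⁿ do not converge in the weak operator topology as N → ∞. -/
/-!
Take for `U` the bilateral shift `e_b ↦ e_{b+1}`. It is unitary, and `⟪Uⁿ x, y⟫ → 0` because this
holds when `x` and `y` are basis vectors and the functionals `x ↦ ⟪Uⁿ x, y⟫` are uniformly bounded.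
For `A` take the anti-diagonal operator `e_b ↦ w_b e_{-b}`; then
`⟪Uⁿ A Uⁿ e₀, e₀⟫ = ⟪A e_n, e_{-n}⟫ = conj w_n`, so the Cesàro means at `(e₀, e₀)` are those of `w`.
With `w_n = 1` exactly when `⌈log₂ n⌉` is even, `w` is constant on each dyadic block
`(2^m, 2^{m+1}]`, with value alternating in `m`. Convergent Cesàro means would force the averages of
`w` over these blocks to converge to the same limit.
-/

open Filter Topology

noncomputable section

/-- The Hilbert space `ℓ²(ℤ)` of square-summable two-sided complex sequences. -/
abbrev H : Type := lp (fun _ : ℤ => ℂ) 2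

open scoped ENNReal InnerProductSpace

theorem Memℓp.comp_injective {α β E : Type*} [NormedAddCommGroup E] {p : ℝ≥0∞} {f : β → E}
    (hf : Memℓp f p) {σ : α → β} (hσ : σ.Injective) : Memℓp (f ∘ σ) p := by
  obtain rfl | rfl | hp := p.trichotomy
  · exact memℓp_zero_iff.2 ((memℓp_zero_iff.1 hf).preimage hσ.injOn)
  · exact memℓp_infty_iff.2
      ((memℓp_infty_iff.1 hf).mono (Set.range_comp_subset_range σ fun b => ‖f b‖))
  · exact (memℓp_gen_iff hp).2 (((memℓp_gen_iff hp).1 hf).comp_injective hσ)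

namespace lp

section Reindex

variable {α β 𝕜 E : Type*} [NormedField 𝕜] [NormedAddCommGroup E] [NormedSpace 𝕜 E]
  {p : ℝ≥0∞} [Fact (1 ≤ p)]

theorem norm_le_of_apply_eq_comp {f : lp (fun _ : β => E) p} {g : lp (fun _ : α => E) p}
    {σ : α → β} (hσ : σ.Injective) (hfg : ∀ a, g a = f (σ a)) : ‖g‖ ≤ ‖f‖ := by
  rcases p.dichotomy with rfl | hp
  · exact norm_le_of_forall_le (norm_nonneg f) fun a =>
      hfg a ▸ norm_apply_le_norm ENNReal.top_ne_zero f (σ a)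
  · have hp : 0 < p.toReal := zero_lt_one.trans_le hp
    refine norm_le_of_forall_sum_le hp (norm_nonneg f) fun s => ?_
    calc ∑ a ∈ s, ‖g a‖ ^ p.toReal = ∑ b ∈ s.map ⟨σ, hσ⟩, ‖f b‖ ^ p.toReal := by simp [hfg]
      _ ≤ ‖f‖ ^ p.toReal := sum_rpow_le_norm_rpow hp f _

def compEquiv (σ : α ≃ β) : lp (fun _ : β => E) p ≃ₗᵢ[𝕜] lp (fun _ : α => E) p where
  toFun f := ⟨f ∘ σ, (lp.memℓp f).comp_injective σ.injective⟩
  invFun g := ⟨g ∘ σ.symm, (lp.memℓp g).comp_injective σ.symm.injective⟩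
  map_add' _ _ := rfl
  map_smul' _ _ := rfl
  left_inv f := by ext; simp
  right_inv g := by ext; simp
  norm_map' f := le_antisymm (norm_le_of_apply_eq_comp σ.injective fun _ => rfl)
    (norm_le_of_apply_eq_comp σ.symm.injective fun b => congrArg f (σ.apply_symm_apply b).symm)

@[simp]
theorem compEquiv_apply (σ : α ≃ β) (f : lp (fun _ : β => E) p) (a : α) :
    compEquiv (𝕜 := 𝕜) σ f a = f (σ a) := rfl

theorem compEquiv_single [DecidableEq α] [DecidableEq β] (σ : α ≃ β) (b : β) (v : E) :
    compEquiv (𝕜 := 𝕜) σ (lp.single (E := fun _ => E) p b v) = lp.single p (σ.symm b) v := by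
  ext a
  simp [lp.single_apply, Pi.single_apply, ← σ.eq_symm_apply]

end Reindex

variable {α 𝕜 : Type*} {E F : α → Type*} [NontriviallyNormedField 𝕜]
  [∀ i, NormedAddCommGroup (E i)] [∀ i, NormedSpace 𝕜 (E i)]
  [∀ i, NormedAddCommGroup (F i)] [∀ i, NormedSpace 𝕜 (F i)] {p : ℝ≥0∞} [Fact (1 ≤ p)]

theorem mapCLM_single [DecidableEq α] (T : ∀ i, E i →L[𝕜] F i) {K : ℝ} (hK : 0 ≤ K)
    (hTK : ∀ i, ‖T i‖ ≤ K) (i : α) (x : E i) :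
    mapCLM p T hK hTK (lp.single p i x) = lp.single p i (T i x) := by
  ext j
  by_cases h : j = i
  · subst h; simp
  · simp [Pi.single_eq_of_ne h]

theorem tendsto_apply_of_tendsto_apply_single [DecidableEq α] {ι 𝕜₂ G : Type*}
    [NontriviallyNormedField 𝕜₂] {σ₁₂ : 𝕜 →+* 𝕜₂} [RingHomIsometric σ₁₂] [NormedAddCommGroup G]
    [NormedSpace 𝕜₂ G] {l : Filter ι} (hp : p ≠ ∞) {φ : ι → lp E p →SL[σ₁₂] G} {C : ℝ}
    (hφ : ∀ i, ‖φ i‖ ≤ C)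
    (hsingle : ∀ b (v : E b), Tendsto (fun i => φ i (lp.single p b v)) l (𝓝 0))
    (x : lp E p) : Tendsto (fun i => φ i x) l (𝓝 0) := by
  have hequi : Equicontinuous ((↑) ∘ φ) :=
    ((NormedSpace.equicontinuous_TFAE φ).out 5 1 :).mp ⟨C, hφ⟩
  have hclosed : IsClosed {x | Tendsto (fun i => φ i x) l (𝓝 0)} :=
    hequi.isClosed_setOfPred_tendsto continuous_const
  refine hclosed.mem_of_tendsto (lp.hasSum_single hp x) (Eventually.of_forall fun s => ?_)
  simpa using tendsto_finsetSum s fun b _ => hsingle b (x b)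

end lp

def bilateralShift : H →L[ℂ] H :=
  ((lp.compEquiv (Equiv.subRight (1 : ℤ)) : H ≃ₗᵢ[ℂ] H).toContinuousLinearEquiv : H →L[ℂ] H)

theorem bilateralShift_apply (x : H) (k : ℤ) : bilateralShift x k = x (k - 1) := rfl

theorem norm_bilateralShift_apply (x : H) : ‖bilateralShift x‖ = ‖x‖ :=
  LinearIsometryEquiv.norm_map _ x

theorem bilateralShift_surjective : Function.Surjective bilateralShift :=
  LinearIsometryEquiv.surjective _

theorem norm_bilateralShift_pow_apply (n : ℕ) (x : H) : ‖(bilateralShift ^ n) x‖ = ‖x‖ := by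
  induction n with
  | zero => rfl
  | succ n ih => rw [pow_succ', mul_apply_eq_comp, norm_bilateralShift_apply, ih]

theorem bilateralShift_pow_apply (n : ℕ) (x : H) (k : ℤ) :
    (bilateralShift ^ n) x k = x (k - n) := by
  induction n generalizing k with
  | zero => simp
  | succ n ih =>
    rw [pow_succ', mul_apply_eq_comp, bilateralShift_apply, ih]
    push_cast
    ring_nf

theorem bilateralShift_pow_single (n : ℕ) (b : ℤ) (v : ℂ) :
    (bilateralShift ^ n) (lp.single 2 b v) = lp.single 2 (b + n) v := by
  ext k
  rw [bilateralShift_pow_apply]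
  by_cases h : k = b + n
  · subst h; simp
  · rw [lp.single_apply_ne _ _ _ h, lp.single_apply_ne _ _ _ (by omega)]

theorem tendsto_inner_bilateralShift_pow_single_left (b : ℤ) (v : ℂ) (y : H) :
    Tendsto (fun n : ℕ => ⟪(bilateralShift ^ n) (lp.single 2 b v), y⟫_ℂ) atTop (𝓝 0) := by
  refine lp.tendsto_apply_of_tendsto_apply_single
    (φ := fun n => innerSL ℂ ((bilateralShift ^ n) (lp.single 2 b v))) (C := ‖v‖)
    ENNReal.ofNat_ne_top (fun n => ?_) (fun c w => ?_) y
  · rw [innerSL_apply_norm, norm_bilateralShift_pow_apply, lp.norm_single two_pos]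
  · refine tendsto_const_nhds.congr' ?_
    filter_upwards [eventually_gt_atTop (c - b).toNat] with n hn
    rw [innerSL_apply_apply, bilateralShift_pow_single, lp.inner_single_left,
      lp.single_apply_ne _ _ _ (by omega), inner_zero_right]

theorem tendsto_inner_bilateralShift_pow (x y : H) :
    Tendsto (fun n : ℕ => ⟪(bilateralShift ^ n) x, y⟫_ℂ) atTop (𝓝 0) := by
  refine lp.tendsto_apply_of_tendsto_apply_single
    (φ := fun n => (innerSLFlip ℂ y).comp (bilateralShift ^ n)) (C := ‖y‖)
    ENNReal.ofNat_ne_top (fun n => ?_) (fun b v => ?_) x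
  · refine ContinuousLinearMap.opNorm_le_bound _ (norm_nonneg y) fun x => ?_
    calc ‖⟪(bilateralShift ^ n) x, y⟫_ℂ‖ ≤ ‖(bilateralShift ^ n) x‖ * ‖y‖ :=
          norm_inner_le_norm _ _
      _ = ‖y‖ * ‖x‖ := by rw [norm_bilateralShift_pow_apply, mul_comm]
  · exact tendsto_inner_bilateralShift_pow_single_left b v y

theorem inner_bilateralShift_pow_mul_mul_bilateralShift_pow_single_zero (A : H →L[ℂ] H) (n : ℕ) :
    ⟪(bilateralShift ^ n * A * bilateralShift ^ n) (lp.single 2 0 1), lp.single 2 0 1⟫_ℂ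
      = ⟪A (lp.single 2 n 1), lp.single 2 (-n) 1⟫_ℂ := by
  simp only [mul_apply_eq_comp, bilateralShift_pow_single, lp.inner_single_right,
    bilateralShift_pow_apply, zero_add, zero_sub]

def antidiagonalOperator (w : ℤ → ℂ) (hw : ∀ k, ‖w k‖ ≤ 1) : H →L[ℂ] H :=
  ((lp.compEquiv (Equiv.neg ℤ) : H ≃ₗᵢ[ℂ] H).toContinuousLinearEquiv : H →L[ℂ] H) ∘L
    lp.mapCLM 2 (fun k => w k • ContinuousLinearMap.id ℂ ℂ) zero_le_one fun k =>
      (norm_smul_le _ _).trans (mul_le_one₀ (hw k) (norm_nonneg _) ContinuousLinearMap.norm_id_le)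

theorem antidiagonalOperator_single (w : ℤ → ℂ) (hw : ∀ k, ‖w k‖ ≤ 1) (b : ℤ) (v : ℂ) :
    antidiagonalOperator w hw (lp.single 2 b v) = lp.single 2 (-b) (w b * v) := by
  simp [antidiagonalOperator, lp.mapCLM_single, lp.compEquiv_single]

theorem inner_antidiagonalOperator_single (w : ℤ → ℂ) (hw : ∀ k, ‖w k‖ ≤ 1) (b : ℤ) :
    ⟪antidiagonalOperator w hw (lp.single 2 b 1), lp.single 2 (-b) 1⟫_ℂ = star (w b) := by
  simp [antidiagonalOperator_single, lp.inner_single_left]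

def dyadicParity {R : Type*} [Zero R] [One R] (n : ℕ) : R :=
  if Even (Nat.clog 2 n) then 1 else 0

theorem clog_two_eq_of_mem_Ioc {m n : ℕ} (hn : n ∈ Finset.Ioc (2 ^ m) (2 * 2 ^ m)) :
    Nat.clog 2 n = m + 1 := by
  rw [Finset.mem_Ioc] at hn
  refine le_antisymm ((Nat.clog_le_iff_le_pow one_lt_two).2 (by rw [pow_succ']; exact hn.2)) ?_
  exact Nat.succ_le_of_lt ((Nat.lt_clog_iff_pow_lt one_lt_two).2 hn.1)

section Cesaro

variable {𝕜 : Type*} [NormedField 𝕜] [CharZero 𝕜]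

theorem Filter.Tendsto.inv_mul_sum_Ioc_two_mul {a : ℕ → 𝕜} {c : 𝕜}
    (h : Tendsto (fun N : ℕ => (N : 𝕜)⁻¹ * ∑ n ∈ Finset.Icc 1 N, a n) atTop (𝓝 c)) :
    Tendsto (fun N : ℕ => (N : 𝕜)⁻¹ * ∑ n ∈ Finset.Ioc N (2 * N), a n) atTop (𝓝 c) := by
  have h₂ := h.comp (tendsto_id.const_mul_atTop' two_pos)
  have hsplit (N : ℕ) : (N : 𝕜)⁻¹ * ∑ n ∈ Finset.Ioc N (2 * N), a n
      = 2 * (((2 * N : ℕ) : 𝕜)⁻¹ * ∑ n ∈ Finset.Icc 1 (2 * N), a n)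
        - (N : 𝕜)⁻¹ * ∑ n ∈ Finset.Icc 1 N, a n := by
    have hIcc (M : ℕ) : Finset.Icc 1 M = Finset.Ioc 0 M := Finset.Icc_add_one_left_eq_Ioc 0 M
    rw [hIcc, hIcc, ← Finset.sum_Ioc_consecutive a (Nat.zero_le N) (by omega : N ≤ 2 * N)]
    push_cast
    simp only [mul_inv, mul_assoc, mul_inv_cancel_left₀ (two_ne_zero' 𝕜)]
    ring
  simp only [hsplit]
  simpa [two_mul] using (h₂.const_mul 2).sub h

theorem inv_mul_sum_Ioc_dyadicParity (m : ℕ) :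
    ((2 ^ m : ℕ) : 𝕜)⁻¹ * ∑ n ∈ Finset.Ioc (2 ^ m) (2 * 2 ^ m), (dyadicParity n : 𝕜)
      = if Even (m + 1) then 1 else 0 := by
  have hconst : ∀ n ∈ Finset.Ioc (2 ^ m) (2 * 2 ^ m),
      (dyadicParity n : 𝕜) = if Even (m + 1) then 1 else 0 := fun n hn => by
    rw [dyadicParity, clog_two_eq_of_mem_Ioc hn]
  rw [Finset.sum_congr rfl hconst, Finset.sum_const, Nat.card_Ioc, two_mul, Nat.add_sub_cancel,
    nsmul_eq_mul]
  split_ifs <;> simp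

theorem not_tendsto_cesaro_dyadicParity (c : 𝕜) :
    ¬ Tendsto (fun N : ℕ => (N : 𝕜)⁻¹ * ∑ n ∈ Finset.Icc 1 N, (dyadicParity n : 𝕜)) atTop
      (𝓝 c) := by
  intro h
  have hblock : Tendsto (fun m : ℕ => if Even (m + 1) then (1 : 𝕜) else 0) atTop (𝓝 c) := by
    simpa only [Function.comp_def, inv_mul_sum_Ioc_dyadicParity] using
      h.inv_mul_sum_Ioc_two_mul.comp (tendsto_pow_atTop_atTop_of_one_lt one_lt_two)
  have hodd : c = 1 := by
    refine tendsto_nhds_unique (hblock.comp (StrictMono.tendsto_atTop (φ := fun k => 2 * k + 1)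
      fun a b hab => by dsimp only; omega)) ?_
    simp [Function.comp_def, Nat.even_add_one]
  have heven : c = 0 := by
    refine tendsto_nhds_unique (hblock.comp (StrictMono.tendsto_atTop (φ := fun k => 2 * k)
      fun a b hab => by dsimp only; omega)) ?_
    simp [Function.comp_def, Nat.even_add_one, Nat.odd_iff]
  exact one_ne_zero (hodd.symm.trans heven)

end Cesaro

/-- There exist a weakly stable unitary operator `U` on `ℓ²(ℤ)` and a bounded operator `A`
such that the Cesàro means `(1/N) ∑_{n=1}^N Uⁿ A Uⁿ` do not converge in the weak operator
topology. -/
theorem exists_weaklyStable_unitary_cesaro_not_weakly_convergent :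
    ∃ U A : H →L[ℂ] H,
      -- `U` is unitary: a surjective linear isometry
      (∀ x : H, ‖U x‖ = ‖x‖) ∧ Function.Surjective U ∧
      -- `U` is weakly stable: `Uⁿ → 0` in the weak operator topology
      (∀ x y : H, Tendsto (fun n : ℕ => (inner ℂ ((U ^ n) x) y : ℂ)) atTop (nhds 0)) ∧
      -- the Cesàro means `(1/N) ∑_{n=1}^N Uⁿ A Uⁿ` do not converge in the weak operator topology
      ¬ (∀ x y : H, ∃ c : ℂ,
          Tendsto
            (fun N : ℕ =>
              (inner ℂ (((N : ℂ)⁻¹ • ∑ n ∈ Finset.Icc 1 N, U ^ n * A * U ^ n) x) y : ℂ))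
            atTop (nhds c)) := by
  let w : ℤ → ℂ := fun k => dyadicParity k.toNat
  have hw : ∀ k, ‖w k‖ ≤ 1 := fun k => by unfold w dyadicParity; split_ifs <;> simp
  refine ⟨bilateralShift, antidiagonalOperator w hw, norm_bilateralShift_apply,
    bilateralShift_surjective, tendsto_inner_bilateralShift_pow, fun hconv => ?_⟩
  obtain ⟨c, hc⟩ := hconv (lp.single 2 0 1) (lp.single 2 0 1)
  refine not_tendsto_cesaro_dyadicParity c (hc.congr fun N => ?_)
  rw [smul_apply, inner_smul_left, sum_apply, sum_inner]
  simp only [inner_bilateralShift_pow_mul_mul_bilateralShift_pow_single_zero,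
    inner_antidiagonalOperator_single]
  simp [w, dyadicParity, apply_ite]

end
end

section
/- Let H = ℓ²(ℤ) with standard orthonormal basis {e_b}_{b∈ℤ}, let U be the left shift operator (U e_b = e_{b-1}), and let f : ℕ⁺ → {0,1} be a sequence whose Cesàro means (1/N) ∑_{n=1}^N f(n) do not converge. Define A by A e_b = e_{f(−b)−b} for b < 0 and A e_b = e_b for b ≥ 0. Then A is a bounded operator, ⟨Uⁿ A Uⁿ e₀, e₀⟩ = 1 − f(n) for every n ≥ 1, and consequently the Cesàro means (1/N) ∑_{n=1}^N Uⁿ A Uⁿ do not converge in the weak operator topology. -/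
open Filter Topology

noncomputable section

/-- The standard orthonormal basis vector `e_b` of `ℓ²(ℤ)`. -/
noncomputable def e (b : ℤ) : H := lp.single 2 b (1 : ℂ)

/-!
`A` is not an isometry (`e_{-1}` and `e_{-2}` may both be sent to `e_2`), but it is the sum of
three operators `x ↦ 1_s · (x ∘ σ)` with `σ` injective: the projection onto `b ≥ 0` and, for
`d ∈ {0, 1}`, the reflection `b ↦ d - b` restricted to the `b < 0` with `f (-b) = d`. Each has
norm at most `1` on any `ℓᵖ` with `p < ∞`, since `σ` does not repeat coordinates.

Conjugating by `Uⁿ` moves `e₀` to `e_{-n}`, so `Uⁿ A Uⁿ e₀ = e_{f n}`, whose `e₀`-coefficient is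
`1 - f n`. Hence the `(e₀, e₀)` matrix coefficients of the Cesàro means of `Uⁿ A Uⁿ` are `1` minus
the Cesàro means of `f`, which do not converge.
-/

open scoped ENNReal

namespace lp

variable {𝕜 α E : Type*} [NormedField 𝕜] [NormedAddCommGroup E] [NormedSpace 𝕜 E]
  {p : ℝ≥0∞} {σ : α → α}

theorem sum_norm_rpow_indicator_comp_le (hp : 0 < p.toReal) (hσ : σ.Injective) (s : Set α)
    (x : lp (fun _ : α => E) p) (t : Finset α) :
    ∑ k ∈ t, ‖s.indicator (x ∘ σ) k‖ ^ p.toReal ≤ ‖x‖ ^ p.toReal := by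
  classical
  calc ∑ k ∈ t, ‖s.indicator (x ∘ σ) k‖ ^ p.toReal
      ≤ ∑ k ∈ t, ‖x (σ k)‖ ^ p.toReal := by
        gcongr with k
        exact norm_indicator_le_norm_self _ k
    _ = ∑ j ∈ t.image σ, ‖x j‖ ^ p.toReal :=
        (Finset.sum_image (f := fun j => ‖x j‖ ^ p.toReal) fun _ _ _ _ h => hσ h).symm
    _ ≤ ‖x‖ ^ p.toReal := sum_rpow_le_norm_rpow hp x _

variable [Fact (1 ≤ p)]

def indicatorComp (hp : p ≠ ∞) (hσ : σ.Injective) (s : Set α) :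
    lp (fun _ : α => E) p →L[𝕜] lp (fun _ : α => E) p :=
  have hp' : 0 < p.toReal := ENNReal.toReal_pos (zero_lt_one.trans_le Fact.out).ne' hp
  LinearMap.mkContinuous
    { toFun x := ⟨s.indicator (x ∘ σ), memℓp_gen' (sum_norm_rpow_indicator_comp_le hp' hσ s x)⟩
      map_add' x y := lp.ext (Set.indicator_add' s (x ∘ σ) (y ∘ σ))
      map_smul' c x := lp.ext (Set.indicator_const_smul s c (x ∘ σ)) }
    1 fun x => by
      rw [one_mul]
      exact norm_le_of_forall_sum_le hp' (norm_nonneg x)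
        (sum_norm_rpow_indicator_comp_le hp' hσ s x)

theorem indicatorComp_apply (hp : p ≠ ∞) (hσ : σ.Injective) (s : Set α)
    (x : lp (fun _ : α => E) p) :
    ⇑(indicatorComp (𝕜 := 𝕜) hp hσ s x) = s.indicator (x ∘ σ) := rfl

theorem indicatorComp_single [DecidableEq α] (hp : p ≠ ∞) (hσ : σ.Injective) (s : Set α)
    {b k : α} [Decidable (k ∈ s)] (hk : σ k = b) (a : E) :
    indicatorComp (𝕜 := 𝕜) hp hσ s (lp.single p b a) = if k ∈ s then lp.single p k a else 0 := by
  subst hk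
  ext j
  rw [indicatorComp_apply]
  by_cases hj : j = k
  · subst hj
    split_ifs with hks <;> simp [hks]
  · split_ifs <;> simp [hj, hσ.ne hj]

end lp

theorem inner_e_e (a b : ℤ) : inner ℂ (e a) (e b) = if a = b then 1 else 0 := by
  rw [e, lp.inner_single_left]
  simp [e, Pi.single_apply]

theorem indicatorComp_e {σ : ℤ → ℤ} (hσ : σ.Injective) (s : Set ℤ) [DecidablePred (· ∈ s)]
    {b k : ℤ} (hk : σ k = b) :
    lp.indicatorComp (𝕜 := ℂ) ENNReal.ofNat_ne_top hσ s (e b) = if k ∈ s then e k else 0 :=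
  lp.indicatorComp_single _ hσ s hk 1

theorem pow_apply_e_of_shift {U : H →L[ℂ] H} (hU : ∀ b : ℤ, U (e b) = e (b - 1)) (n : ℕ)
    (b : ℤ) : (U ^ n) (e b) = e (b - n) := by
  induction n generalizing b with
  | zero => simp
  | succ n ih => rw [pow_succ, mul_apply_eq_comp, hU, ih]; push_cast; ring_nf

section SeqOperator

variable (f : ℕ → ℕ)

def partialReflection (d : ℕ) : H →L[ℂ] H :=
  lp.indicatorComp (p := 2) ENNReal.ofNat_ne_top (sub_right_injective (b := (d : ℤ)))
    {k | (d : ℤ) < k ∧ f (k - (d : ℤ)).toNat = d}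

def seqOperator : H →L[ℂ] H :=
  lp.indicatorComp (p := 2) ENNReal.ofNat_ne_top Function.injective_id {k | 0 ≤ k} +
    partialReflection f 0 + partialReflection f 1

theorem partialReflection_e (d : ℕ) (b : ℤ) :
    partialReflection f d (e b) = if b < 0 ∧ f (-b).toNat = d then e (d - b) else 0 := by
  classical
  rw [partialReflection, indicatorComp_e _ _ (sub_sub_cancel (d : ℤ) b)]
  simp only [Set.mem_ofPred_eq, sub_sub_cancel_left, lt_sub_iff_add_lt, add_lt_iff_neg_left]

theorem seqOperator_e (b : ℤ) :
    seqOperator f (e b) = (if 0 ≤ b then e b else 0) +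
      (if b < 0 ∧ f (-b).toNat = 0 then e (-b) else 0) +
      (if b < 0 ∧ f (-b).toNat = 1 then e (1 - b) else 0) := by
  classical
  simp [seqOperator, partialReflection_e, indicatorComp_e _ _ (id_eq b)]

theorem seqOperator_e_of_neg {b : ℤ} (hb : b < 0) (hfb : f (-b).toNat = 0 ∨ f (-b).toNat = 1) :
    seqOperator f (e b) = e (f (-b).toNat - b) := by
  rcases hfb with h | h <;> simp [seqOperator_e, hb, h, not_le.2 hb]

theorem seqOperator_e_of_nonneg {b : ℤ} (hb : 0 ≤ b) : seqOperator f (e b) = e b := by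
  simp [seqOperator_e, hb, not_lt.2 hb]

end SeqOperator

theorem shift_conj_apply_e_zero {U A : H →L[ℂ] H} (hU : ∀ b : ℤ, U (e b) = e (b - 1))
    {f : ℕ → ℕ} (hA : ∀ b : ℤ, b < 0 → A (e b) = e ((f (-b).toNat : ℤ) - b)) {n : ℕ}
    (hn : 1 ≤ n) : (U ^ n * A * U ^ n) (e 0) = e (f n) := by
  rw [mul_apply_eq_comp, mul_apply_eq_comp, pow_apply_e_of_shift hU, zero_sub,
    hA _ (by omega), pow_apply_e_of_shift hU]
  simp

theorem inner_smul_sum_apply {ι E : Type*} [NormedAddCommGroup E] [InnerProductSpace ℂ E]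
    (c : ℂ) (s : Finset ι) (T : ι → E →L[ℂ] E) (x y : E) :
    inner ℂ ((c • ∑ n ∈ s, T n) x) y = starRingEnd ℂ c * ∑ n ∈ s, inner ℂ (T n x) y := by
  rw [smul_apply, inner_smul_left, sum_apply, sum_inner]

theorem tendsto_cesaro_of_tendsto_cesaro_one_sub {a : ℕ → ℝ} {c : ℂ}
    (h : Tendsto (fun N : ℕ => (N : ℂ)⁻¹ * ∑ n ∈ Finset.Icc 1 N, (1 - (a n : ℂ))) atTop (𝓝 c)) :
    Tendsto (fun N : ℕ => (∑ n ∈ Finset.Icc 1 N, a n) / N) atTop (𝓝 (1 - c.re)) := by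
  have h_eq : ∀ᶠ N : ℕ in atTop, (N : ℂ)⁻¹ * ∑ n ∈ Finset.Icc 1 N, (1 - (a n : ℂ)) =
      ((1 - (∑ n ∈ Finset.Icc 1 N, a n) / N : ℝ) : ℂ) := by
    filter_upwards [eventually_ge_atTop 1] with N hN
    have hN0 : (N : ℂ) ≠ 0 := Nat.cast_ne_zero.2 (by omega)
    push_cast
    rw [Finset.sum_sub_distrib, Finset.sum_const, Nat.card_Icc, add_tsub_cancel_right, nsmul_eq_mul,
      mul_one]
    field_simp
  have h_re := (Complex.continuous_re.tendsto c).comp (h.congr' h_eq)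
  simpa [Function.comp_def] using tendsto_const_nhds (x := (1 : ℝ)) |>.sub h_re

/-- Let `U` be the left shift (`U e_b = e_{b-1}`) on `ℓ²(ℤ)` and `f : ℕ⁺ → {0,1}` a sequence
whose Cesàro means do not converge.  Then there is a bounded operator `A` with `A e_b =
e_{f(-b)-b}` for `b < 0` and `A e_b = e_b` for `b ≥ 0`; moreover for any such `A` one has
`⟨Uⁿ A Uⁿ e₀, e₀⟩ = 1 - f(n)` for all `n ≥ 1`, and the Cesàro means `(1/N) ∑_{n=1}^N Uⁿ A Uⁿ`
do not converge in the weak operator topology. -/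
theorem leftShift_example
    (f : ℕ → ℕ) (hf01 : ∀ n : ℕ, 1 ≤ n → f n = 0 ∨ f n = 1)
    (hf : ¬ ∃ c : ℝ,
      Tendsto (fun N : ℕ => (∑ n ∈ Finset.Icc 1 N, (f n : ℝ)) / N) atTop (nhds c))
    (U : H →L[ℂ] H) (hU : ∀ b : ℤ, U (e b) = e (b - 1)) :
    -- `A` exists as a bounded operator
    (∃ A : H →L[ℂ] H,
      (∀ b : ℤ, b < 0 → A (e b) = e ((f (-b).toNat : ℤ) - b)) ∧
      (∀ b : ℤ, 0 ≤ b → A (e b) = e b)) ∧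
    -- and for any such bounded operator `A`:
    (∀ A : H →L[ℂ] H,
      (∀ b : ℤ, b < 0 → A (e b) = e ((f (-b).toNat : ℤ) - b)) →
      (∀ b : ℤ, 0 ≤ b → A (e b) = e b) →
      -- `⟨Uⁿ A Uⁿ e₀, e₀⟩ = 1 - f(n)` for all `n ≥ 1`
      (∀ n : ℕ, 1 ≤ n →
        (inner ℂ (((U ^ n) * A * (U ^ n)) (e 0)) (e 0) : ℂ) = 1 - (f n : ℂ)) ∧
      -- the Cesàro means `(1/N) ∑_{n=1}^N Uⁿ A Uⁿ` do not converge in the weak operator topology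
      ¬ (∀ x y : H, ∃ c : ℂ,
          Tendsto
            (fun N : ℕ =>
              (inner ℂ (((N : ℂ)⁻¹ • ∑ n ∈ Finset.Icc 1 N, U ^ n * A * U ^ n) x) y : ℂ))
            atTop (nhds c))) := by
  refine ⟨⟨seqOperator f, fun b hb => seqOperator_e_of_neg f hb (hf01 _ (by omega)),
    fun b hb => seqOperator_e_of_nonneg f hb⟩, fun A hA _ => ?_⟩
  have h_inner : ∀ n : ℕ, 1 ≤ n →
      (inner ℂ (((U ^ n) * A * (U ^ n)) (e 0)) (e 0) : ℂ) = 1 - (f n : ℂ) := by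
    intro n hn
    rw [shift_conj_apply_e_zero hU hA hn, inner_e_e]
    rcases hf01 n hn with h | h <;> simp [h]
  refine ⟨h_inner, fun h_conv => hf ?_⟩
  obtain ⟨c, hc⟩ := h_conv (e 0) (e 0)
  refine ⟨1 - c.re, tendsto_cesaro_of_tendsto_cesaro_one_sub ?_⟩
  refine hc.congr fun N => ?_
  rw [inner_smul_sum_apply, Finset.sum_congr rfl fun n hn => h_inner n (Finset.mem_Icc.1 hn).1]
  simp

end
end

section
/- Let X be a Banach space, k ≤ m positive integers, and α : {1,…,m} → {1,…,k} a surjective map. Let T₁,…,T_{m−1} be almost periodic bounded linear operators on X, let T_m be power bounded and totally ergodic, and let A₁,…,A_{m−1} be bounded linear operators on X. Then the entangled Cesàro means (1/N^k) ∑_{n₁,…,n_k=1}^{N} T_m^{n_{α(m)}} A_{m−1} T_{m−1}^{n_{α(m−1)}} A_{m−2} ⋯ A₁ T₁^{n_{α(1)}} converge in the strong operator topology as N → ∞; that is, for every x ∈ X the vectors (1/N^k) ∑_{n₁,…,n_k=1}^{N} T_m^{n_{α(m)}} A_{m−1} ⋯ A₁ T₁^{n_{α(1)}} x converge in norm. 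-/
open Filter Topology

noncomputable section

variable {X : Type*} [NormedAddCommGroup X] [NormedSpace ℂ X]

/-- An operator is power bounded if `sup_n ‖Tⁿ‖ < ∞`. -/
def PowerBounded (T : X →L[ℂ] X) : Prop :=
  ∃ C : ℝ, ∀ n : ℕ, ‖T ^ n‖ ≤ C

/-- An operator is almost periodic if it is power bounded and the unimodular eigenvectors
span a dense subspace. -/
def AlmostPeriodic (T : X →L[ℂ] X) : Prop :=
  PowerBounded T ∧
    (Submodule.span ℂ {x : X | ∃ lam : ℂ, ‖lam‖ = 1 ∧ T x = lam • x}).topologicalClosure = ⊤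

/-- An operator is totally ergodic if for every unimodular `λ` the Cesàro means
`(1/N) ∑_{n=1}^N (λT)ⁿ` converge in the strong operator topology. -/
def TotallyErgodic (T : X →L[ℂ] X) : Prop :=
  ∀ lam : ℂ, ‖lam‖ = 1 → ∀ x : X, ∃ y : X,
    Tendsto (fun N : ℕ => (N : ℂ)⁻¹ • ∑ n ∈ Finset.Icc 1 N, ((lam • T) ^ n) x) atTop (nhds y)

/-- The entangled word `T_m^{e m} A_{m-1} T_{m-1}^{e (m-1)} ⋯ A_1 T_1^{e 1}` (indices shifted
to start at `0`). -/
def entangledWord : (m : ℕ) → (Fin (m + 1) → (X →L[ℂ] X)) → (Fin m → (X →L[ℂ] X)) →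
    (Fin (m + 1) → ℕ) → (X →L[ℂ] X)
  | 0, T, _, ex => T 0 ^ ex 0
  | (m + 1), T, A, ex =>
      (T (Fin.last (m + 1)) ^ ex (Fin.last (m + 1))) * A (Fin.last m) *
        entangledWord m (fun j => T j.castSucc) (fun j => A j.castSucc) (fun j => ex j.castSucc)

/-!
Induct on the number of operators, peeling off the innermost, almost periodic one, `T 0`.
All words are uniformly bounded, so the vectors on which the means converge form a closed
subspace, and it suffices to treat a unimodular eigenvector, `T 0 x = λ x`. On it the word equals
`λ ^ n (α 0)` times the shorter word applied to `A 0 x`. If the index `α 0` occurs again at a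
later position `j`, the factor is absorbed by replacing `T j` with `λ • T j`, which keeps all
hypotheses. Otherwise the average over `n (α 0)` splits off as the scalar Cesàro mean of `λ`,
which converges by the mean ergodic theorem on `ℂ`.
-/

section Averages

variable {ι κ M E : Type*} [Fintype ι] [DecidableEq ι]

theorem card_nsmul_sum_piFinset_eq_sum_sum [DecidableEq κ] [AddCommMonoid M] (s : Finset κ)
    (i : ι) (Φ : κ → (ι → κ) → M) (hΦ : ∀ a b n, Φ a (Function.update n i b) = Φ a n) :
    s.card • ∑ n ∈ Fintype.piFinset (fun _ => s), Φ (n i) n =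
      ∑ n ∈ Fintype.piFinset (fun _ => s), ∑ a ∈ s, Φ a n := by
  set P := Fintype.piFinset fun _ : ι => s
  -- `(n, a) ↦ (update n i a, n i)` is an involution of `P ×ˢ s` exchanging the two sums
  let σ : (ι → κ) × κ → (ι → κ) × κ := fun p => (Function.update p.1 i p.2, p.1 i)
  have hσ : ∀ p ∈ P ×ˢ s, σ p ∈ P ×ˢ s := by
    intro p hp
    simp only [Finset.mem_product, Fintype.mem_piFinset, P] at hp ⊢
    refine ⟨fun j => ?_, hp.1 i⟩
    rcases eq_or_ne j i with rfl | hj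
    · simpa [σ] using hp.2
    · simpa [σ, hj] using hp.1 j
  calc s.card • ∑ n ∈ P, Φ (n i) n = ∑ p ∈ P ×ˢ s, Φ (p.1 i) p.1 := by
        rw [Finset.sum_product, Finset.smul_sum]
        simp only [Finset.sum_const]
    _ = ∑ p ∈ P ×ˢ s, Φ p.2 p.1 :=
        Finset.sum_nbij' σ σ hσ hσ (fun p _ => by simp [σ]) (fun p _ => by simp [σ])
          (fun p _ => by simp [σ, hΦ])
    _ = ∑ n ∈ P, ∑ a ∈ s, Φ a n := Finset.sum_product _ _ _

variable [AddCommGroup E] [Module ℂ E]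

def cubeAverage (N : ℕ) (f : (ι → ℕ) → E) : E :=
  ((N : ℂ) ^ Fintype.card ι)⁻¹ • ∑ n ∈ Fintype.piFinset (fun _ : ι => Finset.Icc 1 N), f n

theorem cubeAverage_smul (N : ℕ) (c : ℂ) (f : (ι → ℕ) → E) :
    cubeAverage N (fun n => c • f n) = c • cubeAverage N f := by
  simp only [cubeAverage, ← Finset.smul_sum, smul_comm c]

theorem natCast_card_piFinset_Icc (N : ℕ) :
    ((Fintype.piFinset fun _ : ι => Finset.Icc 1 N).card : ℂ) = (N : ℂ) ^ Fintype.card ι := by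
  simp

theorem cubeAverage_const {N : ℕ} (hN : N ≠ 0) (c : E) :
    cubeAverage (ι := ι) N (fun _ => c) = c := by
  rw [cubeAverage, Finset.sum_const, ← Nat.cast_smul_eq_nsmul ℂ, natCast_card_piFinset_Icc,
    smul_smul, inv_mul_cancel₀ (pow_ne_zero _ (Nat.cast_ne_zero.2 hN)), one_smul]

theorem cubeAverage_eval_eq {N : ℕ} (hN : N ≠ 0) (i : ι) (Φ : ℕ → (ι → ℕ) → E)
    (hΦ : ∀ a b n, Φ a (Function.update n i b) = Φ a n) :
    cubeAverage N (fun n => Φ (n i) n) =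
      cubeAverage N (fun n => (N : ℂ)⁻¹ • ∑ a ∈ Finset.Icc 1 N, Φ a n) := by
  have key := card_nsmul_sum_piFinset_eq_sum_sum (Finset.Icc 1 N) i Φ hΦ
  rw [Nat.card_Icc, Nat.add_sub_cancel] at key
  rw [cubeAverage_smul, cubeAverage, cubeAverage, ← key, ← Nat.cast_smul_eq_nsmul ℂ, smul_comm,
    smul_smul (N : ℂ)⁻¹, inv_mul_cancel₀ (by exact_mod_cast hN), one_smul]

end Averages

section NormedAverages

variable {ι E F : Type*} [Fintype ι] [DecidableEq ι] [NormedAddCommGroup E] [NormedSpace ℂ E]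
  [NormedAddCommGroup F] [NormedSpace ℂ F]

theorem cubeAverage_apply (N : ℕ) (f : (ι → ℕ) → E →L[ℂ] F) (x : E) :
    cubeAverage N f x = cubeAverage N (fun n => f n x) := by
  simp [cubeAverage]

theorem norm_cubeAverage_le (N : ℕ) {f : (ι → ℕ) → E} {D : ℝ} (hf : ∀ n, ‖f n‖ ≤ D) :
    ‖cubeAverage N f‖ ≤ D := by
  set P := Fintype.piFinset fun _ : ι => Finset.Icc 1 N
  rw [cubeAverage, ← natCast_card_piFinset_Icc]
  rcases P.eq_empty_or_nonempty with hP | hP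
  · simpa [P, hP] using (norm_nonneg _).trans (hf 0)
  have hcard : (0 : ℝ) < P.card := by exact_mod_cast hP.card_pos
  calc ‖((P.card : ℂ))⁻¹ • ∑ n ∈ P, f n‖ ≤ (P.card : ℝ)⁻¹ * (P.card • D) := by
        rw [norm_smul, norm_inv, Complex.norm_natCast]
        gcongr
        exact (norm_sum_le _ _).trans (Finset.sum_le_card_nsmul _ _ _ fun n _ => hf n)
    _ = D := by rw [nsmul_eq_mul, inv_mul_cancel_left₀ hcard.ne']

end NormedAverages

section Density

variable {𝕜 E F : Type*} [NontriviallyNormedField 𝕜] [NormedAddCommGroup E] [NormedSpace 𝕜 E]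
  [NormedAddCommGroup F] [NormedSpace 𝕜 F] {S : ℕ → E →L[𝕜] F} {C : ℝ}

theorem isClosed_setOf_cauchySeq_apply (hS : ∀ n, ‖S n‖ ≤ C) :
    IsClosed {x | CauchySeq fun n => S n x} := by
  refine isClosed_of_closure_subset fun x hx => Metric.cauchySeq_iff'.2 fun ε hε => ?_
  have hC : 0 ≤ C := (norm_nonneg _).trans (hS 0)
  obtain ⟨x', hx', hxx'⟩ := Metric.mem_closure_iff.1 hx (ε / (3 * (C + 1))) (by positivity)
  obtain ⟨N, hN⟩ := Metric.cauchySeq_iff'.1 hx' (ε / 3) (by positivity)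
  have hclose : ∀ n, dist (S n x) (S n x') < ε / 3 := fun n => calc
    dist (S n x) (S n x') ≤ C * dist x x' := by
      simpa only [dist_eq_norm, ← map_sub] using (S n).le_of_opNorm_le (hS n) (x - x')
    _ ≤ (C + 1) * dist x x' := by gcongr; linarith
    _ < (C + 1) * (ε / (3 * (C + 1))) := by gcongr
    _ = ε / 3 := by field_simp
  refine ⟨N, fun n hn => ?_⟩
  calc dist (S n x) (S N x)
      ≤ dist (S n x) (S n x') + dist (S n x') (S N x') + dist (S N x') (S N x) :=
        dist_triangle4 _ _ _ _
    _ < ε / 3 + ε / 3 + ε / 3 := by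
        gcongr
        · exact hclose n
        · exact hN n hn
        · rw [dist_comm]; exact hclose N
    _ = ε := by ring

def cauchySubmodule (S : ℕ → E →L[𝕜] F) : Submodule 𝕜 E where
  carrier := {x | CauchySeq fun n => S n x}
  add_mem' {a b} (ha : CauchySeq _) (hb : CauchySeq _) := by
    show CauchySeq fun n => S n (a + b)
    simp only [map_add]
    exact ha.add hb
  zero_mem' := by
    show CauchySeq fun n => S n 0
    simpa only [map_zero] using cauchySeq_const (0 : F)
  smul_mem' c a (ha : CauchySeq _) := by
    show CauchySeq fun n => S n (c • a)
    simp only [map_smul]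
    exact (uniformContinuous_const_smul c).comp_cauchySeq ha

theorem cauchySeq_apply_of_dense (hS : ∀ n, ‖S n‖ ≤ C) {s : Set E}
    (hs : (Submodule.span 𝕜 s).topologicalClosure = ⊤) (h : ∀ x ∈ s, CauchySeq fun n => S n x)
    (x : E) : CauchySeq fun n => S n x := by
  have hle : (⊤ : Submodule 𝕜 E) ≤ cauchySubmodule S :=
    hs ▸ Submodule.topologicalClosure_minimal _ (Submodule.span_le.2 h)
      (isClosed_setOf_cauchySeq_apply hS)
  exact hle Submodule.mem_top

end Density

section Operators

theorem PowerBounded.smul {T : X →L[ℂ] X} (hT : PowerBounded T) {c : ℂ} (hc : ‖c‖ ≤ 1) :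
    PowerBounded (c • T) := by
  obtain ⟨C, hC⟩ := hT
  refine ⟨C, fun n => ?_⟩
  calc ‖(c • T) ^ n‖ ≤ ‖c ^ n‖ * ‖T ^ n‖ := by rw [smul_pow]; exact norm_smul_le (c ^ n) (T ^ n)
    _ ≤ 1 * C := by
        rw [norm_pow]
        exact mul_le_mul (pow_le_one₀ (norm_nonneg c) hc) (hC n) (norm_nonneg _) zero_le_one
    _ = C := one_mul C

theorem AlmostPeriodic.smul {T : X →L[ℂ] X} (hT : AlmostPeriodic T) {c : ℂ} (hc : ‖c‖ = 1) :
    AlmostPeriodic (c • T) := by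
  have hc0 : c ≠ 0 := norm_ne_zero_iff.1 (by rw [hc]; exact one_ne_zero)
  refine ⟨hT.1.smul hc.le, ?_⟩
  convert hT.2 using 4
  funext x
  apply propext
  constructor
  · rintro ⟨lam, hlam, hx⟩
    refine ⟨c⁻¹ * lam, by rw [norm_mul, norm_inv, hc, hlam, inv_one, one_mul], ?_⟩
    rw [mul_smul, ← hx, smul_apply, inv_smul_smul₀ hc0]
  · rintro ⟨lam, hlam, hx⟩
    exact ⟨c * lam, by rw [norm_mul, hc, hlam, one_mul], by
      rw [smul_apply, hx, smul_smul]⟩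

theorem TotallyErgodic.smul {T : X →L[ℂ] X} (hT : TotallyErgodic T) {c : ℂ} (hc : ‖c‖ = 1) :
    TotallyErgodic (c • T) := fun lam hlam x => by
  simpa only [smul_smul] using hT (lam * c) (by rw [norm_mul, hlam, hc, one_mul]) x

theorem pow_apply_of_apply_eq_smul {T : X →L[ℂ] X} {c : ℂ} {x : X} (hx : T x = c • x) (n : ℕ) :
    (T ^ n) x = c ^ n • x := by
  induction n with
  | zero => simp
  | succ n ih =>
    rw [pow_succ']
    show T ((T ^ n) x) = _
    rw [ih, map_smul, hx, smul_smul, pow_succ]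

end Operators

-- the mean ergodic theorem for multiplication by `lam` on the Hilbert space `ℂ`
theorem exists_tendsto_cesaro_pow {lam : ℂ} (hlam : ‖lam‖ ≤ 1) :
    ∃ c : ℂ, Tendsto (fun N : ℕ => (N : ℂ)⁻¹ * ∑ a ∈ Finset.Icc 1 N, lam ^ a) atTop (𝓝 c) := by
  let f : ℂ →L[ℂ] ℂ := lam • ContinuousLinearMap.id ℂ ℂ
  have hf : ‖f‖ ≤ 1 := (norm_smul_le _ _).trans <|
    mul_le_one₀ hlam (norm_nonneg _) (ContinuousLinearMap.norm_id_le (𝕜 := ℂ) (E := ℂ))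
  refine ⟨_, ((f.tendsto_birkhoffAverage_orthogonalProjection hf 1).const_mul lam).congr
    fun N => ?_⟩
  have hiter : ∀ k, (⇑f)^[k] 1 = lam ^ k := fun k => by
    induction k with
    | zero => rfl
    | succ k ih => rw [Function.iterate_succ_apply', ih]; simp [f, pow_succ']
  simp only [birkhoffAverage, birkhoffSum, hiter, id, smul_eq_mul]
  rw [← Finset.Ico_add_one_right_eq_Icc, Finset.sum_Ico_eq_sum_range, Nat.add_sub_cancel]
  simp only [pow_add, pow_one, ← Finset.mul_sum]
  ring

section EntangledWord

theorem entangledWord_succ_eq_mul (m : ℕ) (T : Fin (m + 2) → X →L[ℂ] X)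
    (A : Fin (m + 1) → X →L[ℂ] X) (e : Fin (m + 2) → ℕ) :
    entangledWord (m + 1) T A e =
      entangledWord m (fun j => T j.succ) (fun j => A j.succ) (fun j => e j.succ) *
        A 0 * T 0 ^ e 0 := by
  induction m with
  | zero => simp only [entangledWord, mul_assoc]; rfl
  | succ m ih =>
    rw [entangledWord, ih]
    simp only [entangledWord, Fin.succ_castSucc, mul_assoc]
    rfl

theorem entangledWord_smul (m : ℕ) (T : Fin (m + 1) → X →L[ℂ] X) (A : Fin m → X →L[ℂ] X)
    (c : Fin (m + 1) → ℂ) (e : Fin (m + 1) → ℕ) :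
    entangledWord m (fun j => c j • T j) A e = (∏ j, c j ^ e j) • entangledWord m T A e := by
  induction m with
  | zero => simp [entangledWord, smul_pow]
  | succ m ih =>
    simp only [entangledWord, ih, smul_pow, Fin.prod_univ_castSucc, smul_mul_assoc,
      mul_smul_comm, smul_smul]

theorem exists_norm_entangledWord_le (m : ℕ) (T : Fin (m + 1) → X →L[ℂ] X)
    (A : Fin m → X →L[ℂ] X) (hT : ∀ j, PowerBounded (T j)) :
    ∃ D, ∀ e, ‖entangledWord m T A e‖ ≤ D := by
  induction m with
  | zero =>
    obtain ⟨C, hC⟩ := hT 0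
    exact ⟨C, fun e => hC (e 0)⟩
  | succ m ih =>
    obtain ⟨D, hD⟩ := ih (fun j => T j.castSucc) (fun j => A j.castSucc) (fun j => hT _)
    obtain ⟨C, hC⟩ := hT (Fin.last (m + 1))
    refine ⟨C * ‖A (Fin.last m)‖ * D, fun e => ?_⟩
    have hC0 : 0 ≤ C := (norm_nonneg _).trans (hC 0)
    rw [entangledWord]
    refine (norm_mul_le _ _).trans (mul_le_mul ((norm_mul_le _ _).trans ?_) (hD _)
      (norm_nonneg _) (by positivity))
    exact mul_le_mul_of_nonneg_right (hC _) (norm_nonneg _)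

end EntangledWord

section Convergence

variable {ι : Type*} [Fintype ι] [DecidableEq ι]

variable (ι) in
def HasConvergentEntangledMeans (m : ℕ) (T : Fin (m + 1) → X →L[ℂ] X)
    (A : Fin m → X →L[ℂ] X) : Prop :=
  ∀ (α : Fin (m + 1) → ι) (x : X), ∃ y, Tendsto
    (fun N => cubeAverage N fun n : ι → ℕ => entangledWord m T A (fun j => n (α j)) x)
    atTop (𝓝 y)

theorem hasConvergentEntangledMeans_zero (T : Fin 1 → X →L[ℂ] X) (A : Fin 0 → X →L[ℂ] X)
    (hT : TotallyErgodic (T 0)) : HasConvergentEntangledMeans ι 0 T A := by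
  intro α x
  obtain ⟨y, hy⟩ := hT 1 norm_one x
  refine ⟨y, hy.congr' ?_⟩
  filter_upwards [eventually_ne_atTop 0] with N hN
  symm
  refine (cubeAverage_eval_eq hN (α 0) (fun a _ => (T 0 ^ a) x) fun _ _ _ => rfl).trans ?_
  rw [cubeAverage_const hN, one_smul]

theorem exists_tendsto_cubeAverage_of_apply_eq_smul {m : ℕ} {T : Fin (m + 2) → X →L[ℂ] X}
    {A : Fin (m + 1) → X →L[ℂ] X}
    (h : ∀ c : Fin (m + 1) → ℂ, (∀ j, ‖c j‖ = 1) →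
      HasConvergentEntangledMeans ι m (fun j => c j • T j.succ) (fun j => A j.succ))
    {lam : ℂ} (hlam : ‖lam‖ = 1) {x : X} (hx : T 0 x = lam • x) (α : Fin (m + 2) → ι) :
    ∃ y, Tendsto
      (fun N => cubeAverage N fun n : ι → ℕ => entangledWord (m + 1) T A (fun j => n (α j)) x)
      atTop (𝓝 y) := by
  set W := entangledWord m (fun j => T j.succ) (fun j => A j.succ)
  have hword : ∀ e, entangledWord (m + 1) T A e x = lam ^ e 0 • W (fun j => e j.succ) (A 0 x) := by
    intro e
    rw [entangledWord_succ_eq_mul]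
    show W _ (A 0 ((T 0 ^ e 0) x)) = _
    rw [pow_apply_of_apply_eq_smul hx, map_smul, map_smul]
  simp only [hword]
  by_cases hrep : ∃ j₀ : Fin (m + 1), α j₀.succ = α 0
  · -- the factor `lam ^ n (α 0)` is absorbed into `T j₀.succ`
    obtain ⟨j₀, hj₀⟩ := hrep
    have hc : ∀ j, ‖(Pi.mulSingle j₀ lam : Fin (m + 1) → ℂ) j‖ = 1 := by
      intro j
      rcases eq_or_ne j j₀ with rfl | hj
      · simpa using hlam
      · simp [hj]
    obtain ⟨y, hy⟩ := h _ hc (fun j => α j.succ) (A 0 x)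
    refine ⟨y, hy.congr fun N => ?_⟩
    congr 1
    funext n
    rw [entangledWord_smul, smul_apply,
      Fintype.prod_eq_single j₀ fun j hj => by simp [hj], Pi.mulSingle_eq_same, hj₀]
  · -- the index `α 0` is free, and its average is a scalar Cesàro mean
    push Not at hrep
    obtain ⟨c, hc⟩ := exists_tendsto_cesaro_pow hlam.le
    obtain ⟨y, hy⟩ := h 1 (fun _ => norm_one) (fun j => α j.succ) (A 0 x)
    simp only [Pi.one_apply, one_smul] at hy
    refine ⟨c • y, (hc.smul hy).congr' ?_⟩
    filter_upwards [eventually_ne_atTop 0] with N hN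
    symm
    refine (cubeAverage_eval_eq hN (α 0) (fun a n => lam ^ a • W (fun j => n (α j.succ)) (A 0 x))
      fun a b n => ?_).trans ?_
    · simp only [Function.update_of_ne (hrep _)]
    · simp only [← Finset.sum_smul, smul_smul, cubeAverage_smul]
      rfl

theorem hasConvergentEntangledMeans [CompleteSpace X] (m : ℕ) (T : Fin (m + 1) → X →L[ℂ] X)
    (A : Fin m → X →L[ℂ] X) (hAP : ∀ j : Fin m, AlmostPeriodic (T j.castSucc))
    (hPB : PowerBounded (T (Fin.last m))) (hTE : TotallyErgodic (T (Fin.last m))) :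
    HasConvergentEntangledMeans ι m T A := by
  induction m with
  | zero => exact hasConvergentEntangledMeans_zero T A hTE
  | succ m ih =>
    intro α x
    obtain ⟨D, hD⟩ := exists_norm_entangledWord_le _ T A (Fin.lastCases hPB fun j => (hAP j).1)
    let S : ℕ → X →L[ℂ] X := fun N =>
      cubeAverage N fun n : ι → ℕ => entangledWord (m + 1) T A (fun j => n (α j))
    have hS : ∀ N, ‖S N‖ ≤ D := fun N => norm_cubeAverage_le N fun _ => hD _
    have hrescaled : ∀ c : Fin (m + 1) → ℂ, (∀ j, ‖c j‖ = 1) →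
        HasConvergentEntangledMeans ι m (fun j => c j • T j.succ) (fun j => A j.succ) :=
      fun c hc => ih _ _ (fun j => by simpa only [Fin.succ_castSucc] using (hAP j.succ).smul (hc _))
        (hPB.smul (hc _).le) (hTE.smul (hc _))
    have heig : ∀ x ∈ {x | ∃ lam : ℂ, ‖lam‖ = 1 ∧ T 0 x = lam • x},
        CauchySeq fun N => S N x := by
      rintro x ⟨lam, hlam, hx⟩
      obtain ⟨y, hy⟩ := exists_tendsto_cubeAverage_of_apply_eq_smul hrescaled hlam hx α
      simpa only [S, cubeAverage_apply] using hy.cauchySeq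
    obtain ⟨y, hy⟩ := cauchySeq_tendsto_of_complete (cauchySeq_apply_of_dense hS (hAP 0).2 heig x)
    exact ⟨y, by simpa only [S, cubeAverage_apply] using hy⟩

end Convergence

-- The paper's `m` is `m + 1` here.
theorem entangled_cesaro_converges_almostPeriodic_general
    [CompleteSpace X] (m k : ℕ)
    (α : Fin (m + 1) → Fin k)
    (T : Fin (m + 1) → (X →L[ℂ] X)) (A : Fin m → (X →L[ℂ] X))
    (hAP : ∀ j : Fin m, AlmostPeriodic (T j.castSucc))
    (hPB : PowerBounded (T (Fin.last m)))
    (hTE : TotallyErgodic (T (Fin.last m))) :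
    ∀ x : X, ∃ y : X,
      Tendsto
        (fun N : ℕ =>
          ((N : ℂ) ^ k)⁻¹ •
            ∑ n ∈ Fintype.piFinset (fun _ : Fin k => Finset.Icc 1 N),
              entangledWord m T A (fun j => n (α j)) x)
        atTop (nhds y) := by
  intro x
  simpa only [cubeAverage, Fintype.card_fin] using hasConvergentEntangledMeans m T A hAP hPB hTE α x

/-- **Entangled ergodic theorem, almost periodic case.**
If `T₁, …, T_{m-1}` are almost periodic, `T_m` is power bounded and totally ergodic, and
`A₁, …, A_{m-1}` are arbitrary bounded operators, then the entangled Cesàro means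
`(1/N^k) ∑_{n₁,…,n_k=1}^N T_m^{n_{α(m)}} A_{m-1} ⋯ A₁ T₁^{n_{α(1)}}` converge strongly.
(Here the paper's `m` is `m + 1`.) -/
theorem entangled_cesaro_converges_almostPeriodic
    [CompleteSpace X] (m k : ℕ) (hk : 0 < k) (hkm : k ≤ m + 1)
    (α : Fin (m + 1) → Fin k) (hα : Function.Surjective α)
    (T : Fin (m + 1) → (X →L[ℂ] X)) (A : Fin m → (X →L[ℂ] X))
    (hAP : ∀ j : Fin m, AlmostPeriodic (T j.castSucc))
    (hPB : PowerBounded (T (Fin.last m)))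
    (hTE : TotallyErgodic (T (Fin.last m))) :
    ∀ x : X, ∃ y : X,
      Tendsto
        (fun N : ℕ =>
          ((N : ℂ) ^ k)⁻¹ •
            ∑ n ∈ Fintype.piFinset (fun _ : Fin k => Finset.Icc 1 N),
              entangledWord m T A (fun j => n (α j)) x)
        atTop (nhds y) :=
  entangled_cesaro_converges_almostPeriodic_general m k α T A hAP hPB hTE

end
end

section
/- Let X be a Banach space and let (T_n)_{n∈ℕ} and (S_n)_{n∈ℕ} be sequences of bounded linear operators on X such that for every x ∈ X both {T_n x : n ∈ ℕ} and {S_n x : n ∈ ℕ} are relatively norm compact in X. Then {T_n S_n x : n ∈ ℕ} is relatively norm compact in X for every x ∈ X. -/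
/-!
By Banach–Steinhaus the operators `T n` are uniformly bounded, hence uniformly equicontinuous.
The points `S n x` lie in the compact set `K = closure {S n x}`, so every `T n (S n x)` lies in
`⋃ n, T n '' K`. Covering `K` by finitely many small balls around points `y`, equicontinuity puts
`⋃ n, T n '' K` close to the finite union of the totally bounded orbits `{T n y}`; hence it is
totally bounded, and its closure is compact since `X` is complete.
-/

open Set

theorem UniformEquicontinuous.totallyBounded_iUnion_image {ι α β : Type*} [UniformSpace α]
    [UniformSpace β] {F : ι → α → β} (hF : UniformEquicontinuous F) {K : Set α}
    (hK : TotallyBounded K) (hFK : ∀ x ∈ K, TotallyBounded (range fun i => F i x)) :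
    TotallyBounded (⋃ i, F i '' K) := by
  intro V hV
  obtain ⟨W, hW, hWV⟩ := comp_mem_uniformity_sets hV
  obtain ⟨t, htK, htfin, hKt⟩ := hK.exists_subset (hF W hW)
  obtain ⟨s, hsfin, hts⟩ :=
    (totallyBounded_biUnion htfin).2 (fun y hy => hFK y (htK hy)) W hW
  refine ⟨s, hsfin, ?_⟩
  rintro _ ⟨_, ⟨i, rfl⟩, x, hxK, rfl⟩
  obtain ⟨y, hyt, hxy⟩ := mem_iUnion₂.1 (hKt hxK)
  obtain ⟨z, hzs, hyz⟩ := mem_iUnion₂.1 (hts (mem_biUnion hyt (mem_range_self i)))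
  exact mem_biUnion hzs (hWV ⟨F i y, hxy i, hyz⟩)

theorem ContinuousLinearMap.uniformEquicontinuous_of_isBounded_range {ι 𝕜 E F : Type*}
    [NontriviallyNormedField 𝕜] [NormedAddCommGroup E] [NormedSpace 𝕜 E] [CompleteSpace E]
    [NormedAddCommGroup F] [NormedSpace 𝕜 F] {g : ι → E →L[𝕜] F}
    (hg : ∀ x, Bornology.IsBounded (range fun i => g i x)) :
    UniformEquicontinuous fun i => ⇑(g i) :=
  PolynormableSpace.banach_steinhaus fun x => (NormedSpace.isVonNBounded_iff 𝕜).2 (hg x)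

/-- If `(T_n)` and `(S_n)` are sequences of bounded operators on a Banach space such that all
orbits `{T_n x}` and `{S_n x}` are relatively norm compact, then so are the orbits
`{T_n (S_n x)}`. -/
theorem relCompact_orbit_comp
    {X : Type*} [NormedAddCommGroup X] [NormedSpace ℂ X] [CompleteSpace X]
    (T S : ℕ → (X →L[ℂ] X))
    (hT : ∀ x : X, IsCompact (closure (Set.range fun n : ℕ => T n x)))
    (hS : ∀ x : X, IsCompact (closure (Set.range fun n : ℕ => S n x))) :
    ∀ x : X, IsCompact (closure (Set.range fun n : ℕ => T n (S n x))) := by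
  intro x
  set K := closure (range fun n => S n x)
  have hTeq : UniformEquicontinuous fun n => ⇑(T n) :=
    ContinuousLinearMap.uniformEquicontinuous_of_isBounded_range fun y =>
      (hT y).isBounded.subset subset_closure
  have hTK : TotallyBounded (⋃ n, T n '' K) :=
    hTeq.totallyBounded_iUnion_image (hS x).totallyBounded fun y _ =>
      (hT y).totallyBounded.subset subset_closure
  have hsub : range (fun n => T n (S n x)) ⊆ ⋃ n, T n '' K := by
    rintro _ ⟨n, rfl⟩
    exact mem_iUnion_of_mem n (mem_image_of_mem _ (subset_closure (mem_range_self n)))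
  exact (hTK.subset hsub).closure.isCompact_of_isClosed isClosed_closure
end
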